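/- Let d ≥ 1, h > 0, and let u : ℝ^d → [0,1] be measurable and Lebesgue integrable. Then ∫_{ℝ^d} |u − G_h ⋆ u| dx ≤ 2·( ∫_{ℝ^d} u dx − ∫_{ℝ^d} u·(G_h ⋆ u) dx ). Equivalently, ∫ |u − G_h ⋆ u| dx ≤ 2√h·E_h(u) where E_h(u) = (1/√h)·∫ (1−u)·(G_h ⋆ u) dx. -/

import Mathlib

/-!
For `a, b ∈ [0,1]` one has `|a - b| = a + b - 2 min(a, b) ≤ a + b - 2ab`. Since `G_h` is a
probability density, `G_h ⋆ u` again takes values in `[0,1]` and has the same integral as `u`;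
integrating the pointwise inequality with `a = u x`, `b = (G_h ⋆ u) x` gives the claim.
-/

open MeasureTheory

/-- The Gaussian heat kernel `G_h(z) = (2πh)^{-d/2} exp(-|z|²/(2h))` on `ℝ^d`. -/
noncomputable def gauss (d : ℕ) (h : ℝ) (z : EuclideanSpace ℝ (Fin d)) : ℝ :=
  (2 * Real.pi * h) ^ (-(d : ℝ) / 2) * Real.exp (-‖z‖ ^ 2 / (2 * h))

/-- Convolution of two functions on `ℝ^d` w.r.t. Lebesgue measure. -/
noncomputable def conv (d : ℕ) (f g : EuclideanSpace ℝ (Fin d) → ℝ)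
    (x : EuclideanSpace ℝ (Fin d)) : ℝ :=
  ∫ y, f (x - y) * g y

open Set
open scoped Convolution

lemma abs_sub_le_add_sub_two_mul {a b : ℝ} (ha : a ∈ Icc 0 1) (hb : b ∈ Icc 0 1) :
    |a - b| ≤ a + b - 2 * (a * b) := by
  obtain ⟨ha0, ha1⟩ := ha
  obtain ⟨hb0, hb1⟩ := hb
  exact abs_sub_le_iff.mpr ⟨by nlinarith, by nlinarith⟩

lemma integral_abs_sub_le_of_mem_Icc {α : Type*} [MeasurableSpace α] {μ : Measure α}
    {u v : α → ℝ} (hu : Integrable u μ) (hv : Integrable v μ)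
    (hu01 : ∀ x, u x ∈ Icc 0 1) (hv01 : ∀ x, v x ∈ Icc 0 1) :
    ∫ x, |u x - v x| ∂μ ≤ (∫ x, u x ∂μ) + (∫ x, v x ∂μ) - 2 * ∫ x, u x * v x ∂μ := by
  have huv : Integrable (fun x => u x * v x) μ :=
    hv.bdd_mul (c := 1) hu.aestronglyMeasurable <| .of_forall fun x => by
      rw [Real.norm_eq_abs, abs_of_nonneg (hu01 x).1]; exact (hu01 x).2
  calc ∫ x, |u x - v x| ∂μ ≤ ∫ x, (u x + v x - 2 * (u x * v x)) ∂μ :=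
        integral_mono (hu.sub hv).abs ((hu.add hv).sub (huv.const_mul 2))
          fun x => abs_sub_le_add_sub_two_mul (hu01 x) (hv01 x)
    _ = (∫ x, u x ∂μ) + (∫ x, v x ∂μ) - 2 * ∫ x, u x * v x ∂μ := by
        rw [integral_sub (f := fun x => u x + v x) (hu.add hv) (huv.const_mul 2),
          integral_add hu hv, integral_const_mul]

lemma integrable_exp_neg_mul_sq_norm {V : Type*} [NormedAddCommGroup V] [InnerProductSpace ℝ V]
    [FiniteDimensional ℝ V] [MeasurableSpace V] [BorelSpace V] {b : ℝ} (hb : 0 < b) :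
    Integrable (fun v : V => Real.exp (-b * ‖v‖ ^ 2)) :=
  Integrable.of_integral_ne_zero <| by
    rw [GaussianFourier.integral_rexp_neg_mul_sq_norm hb]; positivity

section HeatKernel

variable (d : ℕ) {h : ℝ}

lemma gauss_eq_mul_exp :
    gauss d h = fun z => (2 * Real.pi * h) ^ (-(d : ℝ) / 2) * Real.exp (-(2 * h)⁻¹ * ‖z‖ ^ 2) := by
  funext z
  rw [gauss]
  ring_nf

lemma gauss_nonneg (hh : 0 ≤ h) (z : EuclideanSpace ℝ (Fin d)) : 0 ≤ gauss d h z := by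
  unfold gauss; positivity

lemma integrable_gauss (hh : 0 < h) : Integrable (gauss d h) := by
  rw [gauss_eq_mul_exp d]
  exact (integrable_exp_neg_mul_sq_norm (by positivity)).const_mul _

lemma integral_gauss (hh : 0 < h) : ∫ z, gauss d h z = 1 := by
  rw [gauss_eq_mul_exp d, integral_const_mul,
    GaussianFourier.integral_rexp_neg_mul_sq_norm (by positivity), finrank_euclideanSpace_fin,
    show Real.pi / (2 * h)⁻¹ = 2 * Real.pi * h by field_simp,
    ← Real.rpow_add (by positivity), neg_div, neg_add_cancel, Real.rpow_zero]

end HeatKernel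

section Convolution

variable {d : ℕ} {K u : EuclideanSpace ℝ (Fin d) → ℝ}

lemma conv_eq_convolution (K u : EuclideanSpace ℝ (Fin d) → ℝ) :
    conv d K u = u ⋆[ContinuousLinearMap.mul ℝ ℝ] K := by
  funext x
  simp only [conv, convolution_def, ContinuousLinearMap.mul_apply', mul_comm]

lemma integrable_conv (hK : Integrable K) (hu : Integrable u) : Integrable (conv d K u) := by
  rw [conv_eq_convolution]
  exact hu.integrable_convolution _ hK

lemma integral_conv (hK : Integrable K) (hu : Integrable u) :
    ∫ x, conv d K u x = (∫ z, K z) * ∫ x, u x := by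
  rw [conv_eq_convolution, integral_convolution _ hu hK, ContinuousLinearMap.mul_apply', mul_comm]

lemma conv_mem_Icc (hK0 : ∀ z, 0 ≤ K z) (hK : Integrable K) (hK1 : ∫ z, K z = 1)
    (hu01 : ∀ x, u x ∈ Icc 0 1) (x : EuclideanSpace ℝ (Fin d)) : conv d K u x ∈ Icc 0 1 := by
  have hKu0 : ∀ y, 0 ≤ K (x - y) * u y := fun y => mul_nonneg (hK0 _) (hu01 y).1
  refine ⟨integral_nonneg hKu0, ?_⟩
  calc conv d K u x ≤ ∫ y, K (x - y) :=
        integral_mono_of_nonneg (.of_forall hKu0) (hK.comp_sub_left x) <| .of_forall fun y =>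
          mul_le_of_le_one_right (hK0 _) (hu01 y).2
    _ = 1 := by rw [integral_sub_left_eq_self K volume x, hK1]

end Convolution

theorem stmt_10_general (d : ℕ) (h : ℝ) (hh : 0 < h)
    (u : EuclideanSpace ℝ (Fin d) → ℝ)
    (hu_range : ∀ x, u x ∈ Set.Icc (0 : ℝ) 1)
    (hu_int : Integrable u) :
    ∫ x, |u x - conv d (gauss d h) u x|
      ≤ 2 * ((∫ x, u x) - ∫ x, u x * conv d (gauss d h) u x) := by
  have hv01 := conv_mem_Icc (gauss_nonneg d hh.le) (integrable_gauss d hh) (integral_gauss d hh)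
    hu_range
  have hv_int := integrable_conv (integrable_gauss d hh) hu_int
  have hv_mass : ∫ x, conv d (gauss d h) u x = ∫ x, u x := by
    rw [integral_conv (integrable_gauss d hh) hu_int, integral_gauss d hh, one_mul]
  calc _ ≤ _ := integral_abs_sub_le_of_mem_Icc hu_int hv_int hu_range hv01
    _ = _ := by rw [hv_mass]; ring

theorem stmt_10 (d : ℕ) (hd : 1 ≤ d) (h : ℝ) (hh : 0 < h)
    (u : EuclideanSpace ℝ (Fin d) → ℝ)
    (hu_meas : Measurable u) (hu_range : ∀ x, u x ∈ Set.Icc (0 : ℝ) 1)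
    (hu_int : Integrable u) :
    ∫ x, |u x - conv d (gauss d h) u x|
      ≤ 2 * ((∫ x, u x) - ∫ x, u x * conv d (gauss d h) u x) :=
  stmt_10_general d h hh u hu_range hu_int
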